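/- arXiv:2508.06857 — 2 statements merged into one kernel-verified Lean document; each statement's English description precedes it below -/
import Mathlib

section
/- For a vector z in R^n and positive integer k ≤ n, the vector y* defined by y*_i = max(0, z_i) for i among the indices of the k largest entries of z, and y*_i = 0 otherwise, is a minimizer of ‖y − z‖₂² over the set {y ∈ R^n : ‖y‖₀ ≤ k, y ≥ 0}. -/
/-- Number of nonzero entries of a vector. -/
noncomputable def card0 {n : ℕ} (y : Fin n → ℝ) : ℕ :=
  (Finset.univ.filter fun i => y i ≠ 0).card

/-! Writing `z⁺ = max 0 z`, a nonnegative `y` gains `z² - (y - z)² = 2yz - y² ≤ (z⁺)²` in each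
coordinate where it is nonzero and gains nothing elsewhere, with equality for `y = z⁺`. So the
total gain of `y` is at most the sum of `(z⁺)²` over its support, a set of at most `k` indices,
and that sum is largest over the `k` largest entries of `z`, where `ystar` attains it. -/

open Finset

theorem Finset.sum_le_sum_of_card_le_of_forall_le {ι M : Type*} [DecidableEq ι]
    [AddCommMonoid M] [LinearOrder M] [IsOrderedAddMonoid M]
    {f : ι → M} (hf : ∀ i, 0 ≤ f i) {s t : Finset ι} (hst : #s ≤ #t)
    (htop : ∀ i ∈ t, ∀ j ∉ t, f j ≤ f i) :
    ∑ i ∈ s, f i ≤ ∑ i ∈ t, f i := by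
  rw [← sum_inter_add_sum_sdiff s t, ← sum_inter_add_sum_sdiff t s, inter_comm]
  refine add_le_add le_rfl ?_
  rcases (t \ s).eq_empty_or_nonempty with hts | hts
  · have hst' : #(s \ t) ≤ #(t \ s) := card_sdiff_le_card_sdiff_iff.mpr hst
    rw [hts, card_empty, Nat.le_zero, card_eq_zero] at hst'
    simp [hst', hts]
  obtain ⟨m, hm, hmin⟩ := exists_min_image (t \ s) f hts
  calc ∑ i ∈ s \ t, f i
      ≤ #(s \ t) • f m :=
        sum_le_card_nsmul _ _ _ fun j hj => htop m (mem_sdiff.mp hm).1 j (mem_sdiff.mp hj).2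
    _ ≤ #(t \ s) • f m := nsmul_le_nsmul_left (hf m) (card_sdiff_le_card_sdiff_iff.mpr hst)
    _ ≤ ∑ i ∈ t \ s, f i := card_nsmul_le_sum _ _ _ hmin

theorem sq_sub_sq_sub_le_max_zero_sq {y z : ℝ} (hy : 0 ≤ y) :
    z ^ 2 - (y - z) ^ 2 ≤ max 0 z ^ 2 := by
  rcases le_total z 0 with hz | hz
  · rw [max_eq_left hz]; nlinarith
  · rw [max_eq_right hz]; nlinarith [sq_nonneg (y - z)]

theorem sq_sub_sq_sub_max_zero (z : ℝ) : z ^ 2 - (max 0 z - z) ^ 2 = max 0 z ^ 2 := by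
  rcases le_total z 0 with hz | hz
  · rw [max_eq_left hz]; ring
  · rw [max_eq_right hz]; ring

theorem sum_sq_sub_sq_sub_le_sum_support {ι : Type*} [Fintype ι] (z y : ι → ℝ)
    (hy : ∀ i, 0 ≤ y i) :
    ∑ i, (z i ^ 2 - (y i - z i) ^ 2) ≤ ∑ i with y i ≠ 0, max 0 (z i) ^ 2 := by
  rw [← sum_filter_of_ne (p := fun i => y i ≠ 0) fun i _ hi hyi => hi (by simp [hyi])]
  exact sum_le_sum fun i _ => sq_sub_sq_sub_le_max_zero_sq (hy i)

theorem hard_thresholding_projection_general {n k : ℕ}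
    (z : Fin n → ℝ) (I : Finset (Fin n)) (hI : I.card = k)
    (htop : ∀ i ∈ I, ∀ j ∉ I, z j ≤ z i)
    (ystar : Fin n → ℝ)
    (hy : ∀ i, ystar i = if i ∈ I then max 0 (z i) else 0) :
    (card0 ystar ≤ k ∧ ∀ i, 0 ≤ ystar i) ∧
      ∀ y : Fin n → ℝ, card0 y ≤ k → (∀ i, 0 ≤ y i) →
        ∑ i, (ystar i - z i) ^ 2 ≤ ∑ i, (y i - z i) ^ 2 := by
  have hystar_nonneg : ∀ i, 0 ≤ ystar i := fun i => by rw [hy i]; split_ifs <;> simp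
  have hystar_card : card0 ystar ≤ k := hI ▸ card_le_card fun i hi => by
    by_contra hiI
    exact (mem_filter.mp hi).2 (by rw [hy i, if_neg hiI])
  refine ⟨⟨hystar_card, hystar_nonneg⟩, fun y hyk hy0 => ?_⟩
  have hgain : ∑ i, (z i ^ 2 - (ystar i - z i) ^ 2) = ∑ i ∈ I, max 0 (z i) ^ 2 := by
    rw [← Fintype.sum_ite_mem I]
    refine sum_congr rfl fun i _ => ?_
    rw [hy i]
    split_ifs
    · exact sq_sub_sq_sub_max_zero (z i)
    · ring
  have hsupport : ∑ i with y i ≠ 0, max 0 (z i) ^ 2 ≤ ∑ i ∈ I, max 0 (z i) ^ 2 :=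
    sum_le_sum_of_card_le_of_forall_le (fun i => sq_nonneg _) (hI ▸ hyk)
      fun i hi j hj => pow_le_pow_left₀ (le_max_left _ _) (max_le_max_left 0 (htop i hi j hj)) 2
  have hgain_y := sum_sq_sub_sq_sub_le_sum_support z y hy0
  simp only [sum_sub_distrib] at hgain hgain_y
  linarith

theorem hard_thresholding_projection {n k : ℕ} (hk : 0 < k) (hkn : k ≤ n)
    (z : Fin n → ℝ) (I : Finset (Fin n)) (hI : I.card = k)
    (htop : ∀ i ∈ I, ∀ j ∉ I, z j ≤ z i)
    (ystar : Fin n → ℝ)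
    (hy : ∀ i, ystar i = if i ∈ I then max 0 (z i) else 0) :
    (card0 ystar ≤ k ∧ ∀ i, 0 ≤ ystar i) ∧
      ∀ y : Fin n → ℝ, card0 y ≤ k → (∀ i, 0 ≤ y i) →
        ∑ i, (ystar i - z i) ^ 2 ≤ ∑ i, (y i - z i) ^ 2 :=
  hard_thresholding_projection_general z I hI htop ystar hy
end

section
/- (Eckart–Young for Frobenius norm) Let W ∈ R^{n×n} have singular value decomposition W = U Σ Vᵀ with singular values σ₁ ≥ σ₂ ≥ … ≥ σ_n ≥ 0, and let k ≤ n. Then the truncated SVD matrix C* = U Σ_k Vᵀ, where Σ_k keeps the first k singular values and sets the rest to zero, minimizes ‖C − W‖_F² over all matrices C with rank(C) ≤ k, and the minimal value is Σ_{i>k} σ_i². -/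
/-!
Conjugating by the orthogonal matrices `U`, `V` preserves the Frobenius norm and rank, so one may
take `W = diag σ`; the truncation then differs from it exactly in the tail `σ_{k+1}, …, σ_n`.
For the lower bound, let `B` have rank at most `k`, let `P` be the orthogonal projection onto the
orthogonal complement of its column space, and put `t j = ‖P e_j‖²`. Projecting the `j`-th column
of `B - diag σ` with `P` kills `B e_j`, so that column has squared norm at least `σ_j² t_j`.
The weights satisfy `0 ≤ t j ≤ 1` and `∑ t j = dim (range B)ᗮ ≥ n - k`, and for decreasing
`σ_j²` such weights give at least the tail sum `∑_{j > k} σ_j²`.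
-/

def frobSq {n : ℕ} (M : Matrix (Fin n) (Fin n) ℝ) : ℝ :=
  ∑ i, ∑ j, (M i j) ^ 2

open Finset Module Matrix
open scoped RealInnerProductSpace

theorem sum_ite_le_sum_mul_of_antitone {n k : ℕ} {f t : Fin n → ℝ} (hf : Antitone f)
    (hf0 : ∀ i, 0 ≤ f i) (ht0 : ∀ i, 0 ≤ t i) (ht1 : ∀ i, t i ≤ 1)
    (ht : (n : ℝ) - k ≤ ∑ i, t i) :
    ∑ i : Fin n, (if k ≤ (i : ℕ) then f i else 0) ≤ ∑ i, f i * t i := by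
  rcases le_or_gt n k with hnk | hkn
  · calc ∑ i : Fin n, (if k ≤ (i : ℕ) then f i else 0) = 0 :=
          sum_eq_zero fun i _ => if_neg (by omega)
      _ ≤ ∑ i, f i * t i := sum_nonneg fun i _ => mul_nonneg (hf0 i) (ht0 i)
  -- `(f i - c) * (t i - [k ≤ i]) ≥ 0` for the threshold value `c = f k`
  set c := f ⟨k, hkn⟩
  have hpoint : ∀ i : Fin n, (if k ≤ (i : ℕ) then f i else 0) + c * t i ≤
      f i * t i + c * (if k ≤ (i : ℕ) then 1 else 0) := by
    intro i
    split_ifs with hi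
    · nlinarith [hf (show (⟨k, hkn⟩ : Fin n) ≤ i from hi), ht1 i]
    · nlinarith [hf (show i ≤ ⟨k, hkn⟩ from (not_le.1 hi).le), ht0 i]
  have hcount : ∑ i : Fin n, (if k ≤ (i : ℕ) then (1 : ℝ) else 0) = n - k := by
    have h := card_filter_add_card_filter_not (s := (univ : Finset (Fin n))) (· < k)
    simp only [Fin.card_filter_val_lt, not_lt, card_univ, Fintype.card_fin] at h
    rw [sum_boole, ← Nat.cast_sub hkn.le]
    congr 1
    omega
  have hsum := sum_le_sum fun i (_ : i ∈ univ) => hpoint i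
  rw [sum_add_distrib, sum_add_distrib, ← mul_sum, ← mul_sum, hcount] at hsum
  nlinarith [hf0 ⟨k, hkn⟩]

section InnerProductSpace

variable {E : Type*} [NormedAddCommGroup E] [InnerProductSpace ℝ E]

theorem sq_mul_norm_sq_orthogonalProjectionOnto_le (K : Submodule ℝ E)
    [K.HasOrthogonalProjection] {x : E} (hx : x ∈ Kᗮ) (c : ℝ) (y : E) :
    c ^ 2 * ‖K.orthogonalProjectionOnto y‖ ^ 2 ≤ ‖x - c • y‖ ^ 2 := by
  have hproj : K.orthogonalProjectionOnto (x - c • y) = -(c • K.orthogonalProjectionOnto y) := by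
    rw [map_sub, K.orthogonalProjectionOnto_eq_zero_iff.2 hx, map_smul, zero_sub]
  calc c ^ 2 * ‖K.orthogonalProjectionOnto y‖ ^ 2
      = ‖K.orthogonalProjectionOnto (x - c • y)‖ ^ 2 := by
        rw [hproj, norm_neg, norm_smul, mul_pow, Real.norm_eq_abs, sq_abs]
    _ ≤ ‖x - c • y‖ ^ 2 := by gcongr; exact K.norm_orthogonalProjectionOnto_apply_le _

variable [FiniteDimensional ℝ E]

theorem OrthonormalBasis.sum_norm_sq_orthogonalProjectionOnto {ι : Type*} [Fintype ι]
    (b : OrthonormalBasis ι ℝ E) (K : Submodule ℝ E) :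
    ∑ i, ‖K.orthogonalProjectionOnto (b i)‖ ^ 2 = finrank ℝ K := by
  let c := stdOrthonormalBasis ℝ K
  calc ∑ i, ‖K.orthogonalProjectionOnto (b i)‖ ^ 2
      = ∑ i, ∑ j, ⟪(c j : E), b i⟫ ^ 2 := by
        simp_rw [← c.sum_sq_inner_right, Submodule.inner_orthogonalProjectionOnto_eq_of_mem_left]
    _ = ∑ j, ‖(c j : E)‖ ^ 2 := by rw [sum_comm]; simp_rw [b.sum_sq_inner_left]
    _ = ∑ j, (1 : ℝ) := sum_congr rfl fun j _ => by
        rw [show ‖(c j : E)‖ = 1 from c.norm_eq_one j, one_pow]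
    _ = finrank ℝ K := by simp

theorem sum_sq_ite_le_sum_norm_sq_sub_smul {n k : ℕ} (e : OrthonormalBasis (Fin n) ℝ E)
    {σ : Fin n → ℝ} (hσ0 : ∀ i, 0 ≤ σ i) (hσ : Antitone σ) (T : E →ₗ[ℝ] E)
    (hT : finrank ℝ (LinearMap.range T) ≤ k) :
    ∑ i : Fin n, (if k ≤ (i : ℕ) then σ i ^ 2 else 0) ≤ ∑ j, ‖T (e j) - σ j • e j‖ ^ 2 := by
  set K := (LinearMap.range T)ᗮ
  have hdim : (n : ℝ) - k ≤ ∑ j, ‖K.orthogonalProjectionOnto (e j)‖ ^ 2 := by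
    have h := Submodule.finrank_add_finrank_orthogonal (LinearMap.range T)
    rw [finrank_eq_card_basis e.toBasis, Fintype.card_fin] at h
    rw [e.sum_norm_sq_orthogonalProjectionOnto]
    have hn : (n : ℝ) = finrank ℝ (LinearMap.range T) + finrank ℝ K := by exact_mod_cast h.symm
    have hTk : (finrank ℝ (LinearMap.range T) : ℝ) ≤ k := by exact_mod_cast hT
    linarith
  calc ∑ i : Fin n, (if k ≤ (i : ℕ) then σ i ^ 2 else 0)
      ≤ ∑ j, σ j ^ 2 * ‖K.orthogonalProjectionOnto (e j)‖ ^ 2 :=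
        sum_ite_le_sum_mul_of_antitone (fun i j hij => pow_le_pow_left₀ (hσ0 j) (hσ hij) 2)
          (fun i => sq_nonneg _) (fun j => sq_nonneg _)
          (fun j => pow_le_one₀ (norm_nonneg _)
            ((K.norm_orthogonalProjectionOnto_apply_le _).trans_eq (e.norm_eq_one j))) hdim
    _ ≤ ∑ j, ‖T (e j) - σ j • e j‖ ^ 2 := sum_le_sum fun j _ =>
        sq_mul_norm_sq_orthogonalProjectionOnto_le K
          (Submodule.le_orthogonal_orthogonal _ (LinearMap.mem_range_self T _)) _ _

end InnerProductSpace

theorem Matrix.rank_eq_finrank_range_toEuclideanLin {𝕜 m n : Type*} [RCLike 𝕜] [Fintype m]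
    [Fintype n] [DecidableEq n] (M : Matrix m n 𝕜) :
    M.rank = finrank 𝕜 (LinearMap.range (toEuclideanLin M)) :=
  M.rank_eq_finrank_range_toLin (PiLp.basisFun 2 𝕜 m) (PiLp.basisFun 2 𝕜 n)

theorem frobSq_eq_sum_norm_sq_toEuclideanLin {n : ℕ} (M : Matrix (Fin n) (Fin n) ℝ) :
    frobSq M = ∑ j, ‖toEuclideanLin M (EuclideanSpace.basisFun (Fin n) ℝ j)‖ ^ 2 := by
  simp only [frobSq, EuclideanSpace.basisFun_apply, toLpLin_apply, PiLp.ofLp_single, mulVec_single,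
    MulOpposite.op_one, one_smul, EuclideanSpace.real_norm_sq_eq, col_apply]
  exact sum_comm

theorem frobSq_eq_trace {n : ℕ} (M : Matrix (Fin n) (Fin n) ℝ) : frobSq M = (Mᵀ * M).trace := by
  simp only [frobSq, trace, Matrix.diag, mul_apply, transpose_apply, sq]
  exact sum_comm

theorem frobSq_mul_mul_transpose {n : ℕ} {U V : Matrix (Fin n) (Fin n) ℝ} (hU : U * Uᵀ = 1)
    (hV : V * Vᵀ = 1) (M : Matrix (Fin n) (Fin n) ℝ) : frobSq (U * M * Vᵀ) = frobSq M := by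
  rw [frobSq_eq_trace, frobSq_eq_trace, transpose_mul, transpose_mul, transpose_transpose]
  calc (V * (Mᵀ * Uᵀ) * (U * M * Vᵀ)).trace = (V * (Mᵀ * (Uᵀ * U) * M) * Vᵀ).trace := by
        simp only [Matrix.mul_assoc]
    _ = (Vᵀ * V * (Mᵀ * M)).trace := by
        rw [mul_eq_one_comm.1 hU, Matrix.mul_one, trace_mul_comm, ← Matrix.mul_assoc]
    _ = (Mᵀ * M).trace := by rw [mul_eq_one_comm.1 hV, Matrix.one_mul]

theorem frobSq_diagonal {n : ℕ} (d : Fin n → ℝ) : frobSq (diagonal d) = ∑ i, d i ^ 2 := by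
  simp [frobSq, diagonal_apply, ite_pow]

theorem sum_sq_ite_le_frobSq_sub_diagonal {n k : ℕ} {σ : Fin n → ℝ} (hσ0 : ∀ i, 0 ≤ σ i)
    (hσ : Antitone σ) {B : Matrix (Fin n) (Fin n) ℝ} (hB : B.rank ≤ k) :
    ∑ i : Fin n, (if k ≤ (i : ℕ) then σ i ^ 2 else 0) ≤ frobSq (B - diagonal σ) := by
  rw [frobSq_eq_sum_norm_sq_toEuclideanLin]
  set e := EuclideanSpace.basisFun (Fin n) ℝ with he
  have hcol : ∀ j, toEuclideanLin (B - diagonal σ) (e j) = toEuclideanLin B (e j) - σ j • e j := by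
    intro j
    rw [map_sub, LinearMap.sub_apply, sub_right_inj]
    ext i
    simp [he, toLpLin_apply]
  simp_rw [hcol]
  exact sum_sq_ite_le_sum_norm_sq_sub_smul e hσ0 hσ _
    ((rank_eq_finrank_range_toEuclideanLin B).symm.trans_le hB)

theorem Matrix.rank_diagonal_ite_lt_le {R : Type*} [Field R] {n : ℕ} (d : Fin n → R) (k : ℕ) :
    (diagonal fun i : Fin n => if (i : ℕ) < k then d i else 0).rank ≤ k := by
  classical
  rw [rank_diagonal, Fintype.card_subtype]
  calc #{i : Fin n | (if (i : ℕ) < k then d i else 0) ≠ 0}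
      ≤ #{i : Fin n | (i : ℕ) < k} := card_le_card fun i => by
        simp only [ne_eq, ite_eq_right_iff, Classical.not_imp, mem_filter, mem_univ, true_and]
        exact And.left
    _ ≤ k := by rw [Fin.card_filter_val_lt]; exact min_le_right n k

theorem eckart_young_frobenius_general {n k : ℕ}
    (U V W : Matrix (Fin n) (Fin n) ℝ) (σ : Fin n → ℝ)
    (hU : U * U.transpose = 1) (hV : V * V.transpose = 1)
    (hσ_nonneg : ∀ i, 0 ≤ σ i)
    (hσ_mono : ∀ i j : Fin n, i ≤ j → σ j ≤ σ i)
    (hW : W = U * Matrix.diagonal σ * V.transpose)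
    (Cstar : Matrix (Fin n) (Fin n) ℝ)
    (hCstar : Cstar =
      U * Matrix.diagonal (fun i : Fin n => if (i : ℕ) < k then σ i else 0) * V.transpose) :
    Cstar.rank ≤ k ∧
      (∀ C : Matrix (Fin n) (Fin n) ℝ, C.rank ≤ k →
        frobSq (Cstar - W) ≤ frobSq (C - W)) ∧
      frobSq (Cstar - W) = ∑ i : Fin n, (if k ≤ (i : ℕ) then σ i ^ 2 else (0:ℝ)) := by
  have hrank : Cstar.rank ≤ k := by
    rw [hCstar]
    exact (rank_mul_le_left _ _).trans ((rank_mul_le_right _ _).trans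
      (rank_diagonal_ite_lt_le σ k))
  have hval : frobSq (Cstar - W) = ∑ i : Fin n, (if k ≤ (i : ℕ) then σ i ^ 2 else (0:ℝ)) := by
    rw [hCstar, hW, ← sub_mul, ← mul_sub, diagonal_sub, frobSq_mul_mul_transpose hU hV,
      frobSq_diagonal]
    refine sum_congr rfl fun i _ => ?_
    split_ifs <;> first | omega | simp
  refine ⟨hrank, fun C hC => ?_, hval⟩
  have hC' : U * (Uᵀ * C * V) * Vᵀ = C := by
    rw [← Matrix.mul_assoc, ← Matrix.mul_assoc, hU, Matrix.one_mul, Matrix.mul_assoc, hV,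
      Matrix.mul_one]
  have hCW : C - W = U * (Uᵀ * C * V - diagonal σ) * Vᵀ := by rw [hW, mul_sub, sub_mul, hC']
  rw [hval, hCW, frobSq_mul_mul_transpose hU hV]
  exact sum_sq_ite_le_frobSq_sub_diagonal hσ_nonneg (fun i j hij => hσ_mono i j hij)
    ((rank_mul_le_left _ _).trans ((rank_mul_le_right _ _).trans hC))

theorem eckart_young_frobenius {n k : ℕ} (hk : k ≤ n)
    (U V W : Matrix (Fin n) (Fin n) ℝ) (σ : Fin n → ℝ)
    (hU : U * U.transpose = 1) (hV : V * V.transpose = 1)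
    (hσ_nonneg : ∀ i, 0 ≤ σ i)
    (hσ_mono : ∀ i j : Fin n, i ≤ j → σ j ≤ σ i)
    (hW : W = U * Matrix.diagonal σ * V.transpose)
    (Cstar : Matrix (Fin n) (Fin n) ℝ)
    (hCstar : Cstar =
      U * Matrix.diagonal (fun i : Fin n => if (i : ℕ) < k then σ i else 0) * V.transpose) :
    Cstar.rank ≤ k ∧
      (∀ C : Matrix (Fin n) (Fin n) ℝ, C.rank ≤ k →
        frobSq (Cstar - W) ≤ frobSq (C - W)) ∧
      frobSq (Cstar - W) = ∑ i : Fin n, (if k ≤ (i : ℕ) then σ i ^ 2 else (0:ℝ)) :=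
  eckart_young_frobenius_general U V W σ hU hV hσ_nonneg hσ_mono hW Cstar hCstar
end
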